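/- arXiv:0712.2578 — 5 statements merged into one kernel-verified Lean document; each statement's English description precedes it below -/
import Mathlib

section
/- Let b : ℕ → ℝ satisfy b(n+n₀) − b(n) ≥ δ for all n ≥ 0, where δ > 0 and n₀ ≥ 1. Define b̃(k) for k ≥ n₀ as b̃(k) := (1/n₀) ∑_{j=0}^{n₀−1} [ ((n₀−j)/n₀)·b(k+j) + (j/n₀)·b(k+j−n₀) ]. Then b̃(k+1) − b̃(k) ≥ δ/n₀ for every k ≥ n₀. -/
lemma key_id (N : ℕ) (a c : ℕ → ℝ) (n : ℕ) :
    (∑ j ∈ Finset.range n, (((N : ℝ) - j) * a (j + 1) + (j : ℝ) * c (j + 1)))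
      - ∑ j ∈ Finset.range n, (((N : ℝ) - j) * a j + (j : ℝ) * c j)
    = (∑ j ∈ Finset.range n, (a (j + 1) - c (j + 1)))
      + ((N : ℝ) - n) * a n + (n : ℝ) * c n - (N : ℝ) * a 0 := by
  induction n with
  | zero => simp
  | succ n ih =>
    rw [Finset.sum_range_succ, Finset.sum_range_succ, Finset.sum_range_succ]
    push_cast
    linear_combination ih

theorem stmt_6 (b : ℕ → ℝ) (n₀ : ℕ) (hn₀ : 1 ≤ n₀) (δ : ℝ) (hδ : 0 < δ)
    (hb : ∀ n, b (n + n₀) - b n ≥ δ) (bt : ℕ → ℝ)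
    (hbt : ∀ k, n₀ ≤ k →
      bt k = (1 / (n₀ : ℝ)) * ∑ j ∈ Finset.range n₀,
        (((n₀ : ℝ) - j) / n₀ * b (k + j) + (j : ℝ) / n₀ * b (k + j - n₀))) :
    ∀ k, n₀ ≤ k → bt (k + 1) - bt k ≥ δ / n₀ := by
  intro k hk
  obtain ⟨m, rfl⟩ : ∃ m, k = n₀ + m := ⟨k - n₀, by omega⟩
  have hN : (0 : ℝ) < n₀ := by exact_mod_cast hn₀
  set a : ℕ → ℝ := fun j => b (n₀ + m + j) with ha
  set c : ℕ → ℝ := fun j => b (m + j) with hc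
  rw [hbt _ (by omega), hbt _ hk]
  have e1 : ∑ j ∈ Finset.range n₀,
      (((n₀ : ℝ) - j) / n₀ * b (n₀ + m + 1 + j) + (j : ℝ) / n₀ * b (n₀ + m + 1 + j - n₀))
      = (1 / (n₀ : ℝ)) * ∑ j ∈ Finset.range n₀,
        (((n₀ : ℝ) - j) * a (j + 1) + (j : ℝ) * c (j + 1)) := by
    rw [Finset.mul_sum]
    refine Finset.sum_congr rfl fun j hj => ?_
    have h1 : n₀ + m + 1 + j = n₀ + m + (j + 1) := by omega
    have h2 : n₀ + m + 1 + j - n₀ = m + (j + 1) := by omega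
    rw [h2, h1, ha, hc]
    field_simp
    try ring
  have e2 : ∑ j ∈ Finset.range n₀,
      (((n₀ : ℝ) - j) / n₀ * b (n₀ + m + j) + (j : ℝ) / n₀ * b (n₀ + m + j - n₀))
      = (1 / (n₀ : ℝ)) * ∑ j ∈ Finset.range n₀,
        (((n₀ : ℝ) - j) * a j + (j : ℝ) * c j) := by
    rw [Finset.mul_sum]
    refine Finset.sum_congr rfl fun j hj => ?_
    have h2 : n₀ + m + j - n₀ = m + j := by omega
    rw [h2, ha, hc]
    field_simp
    try ring
  rw [e1, e2]
  have hkey := key_id n₀ a c n₀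
  have hend : ((n₀ : ℝ) - n₀) * a n₀ + (n₀ : ℝ) * c n₀ - (n₀ : ℝ) * a 0 = 0 := by
    have : c n₀ = a 0 := by simp [ha, hc, Nat.add_comm]
    rw [this]; ring
  have hsum : (∑ j ∈ Finset.range n₀, (a (j + 1) - c (j + 1))) ≥ n₀ * δ := by
    have : ∀ j ∈ Finset.range n₀, δ ≤ a (j + 1) - c (j + 1) := by
      intro j hj
      have := hb (m + (j + 1))
      have h3 : m + (j + 1) + n₀ = n₀ + m + (j + 1) := by omega
      rw [h3] at this
      simpa [ha, hc] using this
    calc (n₀ : ℝ) * δ = ∑ _j ∈ Finset.range n₀, δ := by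
          simp [mul_comm]
      _ ≤ _ := Finset.sum_le_sum this
  have hdiff : (1 / (n₀ : ℝ)) * ((1 / (n₀ : ℝ)) * ∑ j ∈ Finset.range n₀,
        (((n₀ : ℝ) - j) * a (j + 1) + (j : ℝ) * c (j + 1)))
      - (1 / (n₀ : ℝ)) * ((1 / (n₀ : ℝ)) * ∑ j ∈ Finset.range n₀,
        (((n₀ : ℝ) - j) * a j + (j : ℝ) * c j))
      = (1 / (n₀ : ℝ))^2 * (∑ j ∈ Finset.range n₀, (a (j + 1) - c (j + 1))) := by
    rw [← mul_sub, ← mul_sub, ← mul_assoc]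
    rw [show ((1:ℝ)/n₀) * (1/n₀) = (1/(n₀:ℝ))^2 by ring]
    congr 1
    linarith [hkey, hend]
  rw [hdiff]
  have h4 : (1 / (n₀ : ℝ))^2 * ((n₀ : ℝ) * δ) = δ / n₀ := by
    field_simp
  calc δ / n₀ = (1 / (n₀ : ℝ))^2 * ((n₀ : ℝ) * δ) := h4.symm
    _ ≤ _ := by
        apply mul_le_mul_of_nonneg_left hsum
        positivity
end

section
/- Let S be a finite set, π a probability measure on S, G a finite set of maps γ : S → S such that each γ ∈ G has an 'inverse' γ⁻¹ ∈ G, and R : S × G × G → [0,∞) satisfying: (P1) R(η,γ,δ) = R(η,δ,γ) whenever R(η,γ,δ) > 0; (P2) ∑_η π(η) ∑_{γ,δ} R(η,γ,δ) ψ(η,γ,δ) = ∑_η π(η) ∑_{γ,δ} R(η,γ,δ) ψ(γ(η), γ⁻¹, δ) for every bounded ψ; (P3) γ(δ(η)) = δ(γ(η)) whenever R(η,γ,δ) > 0. Then for all f, g : S → ℝ, ∑_η π(η) ∑_{γ,δ} R(η,γ,δ) (∇_γ f)(η)(∇_δ g)(η) = (1/4) ∑_η π(η) ∑_{γ,δ}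 R(η,γ,δ) (∇_γ ∇_δ f)(η)(∇_γ ∇_δ g)(η), where ∇_γ f(η) := f(γ(η)) − f(η). -/
theorem stmt_8 {S G : Type*} [Fintype S] [Fintype G]
    (act : G → S → S) (inv : G → G)
    (hinv : ∀ γ : G, ∀ η : S, act (inv γ) (act γ η) = η)
    (π : S → ℝ) (hπ : ∀ η, 0 ≤ π η) (hπ1 : ∑ η, π η = 1)
    (R : S → G → G → ℝ) (hR : ∀ η γ δ, 0 ≤ R η γ δ)
    (hP1 : ∀ η γ δ, 0 < R η γ δ → R η γ δ = R η δ γ)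
    (hP2 : ∀ ψ : S → G → G → ℝ,
      ∑ η, π η * ∑ γ, ∑ δ, R η γ δ * ψ η γ δ
        = ∑ η, π η * ∑ γ, ∑ δ, R η γ δ * ψ (act γ η) (inv γ) δ)
    (hP3 : ∀ η γ δ, 0 < R η γ δ → act γ (act δ η) = act δ (act γ η)) :
    ∀ f g : S → ℝ,
      ∑ η, π η * ∑ γ, ∑ δ, R η γ δ
          * (f (act γ η) - f η) * (g (act δ η) - g η)
        = (1 / 4) * ∑ η, π η * ∑ γ, ∑ δ, R η γ δ
          * (f (act γ (act δ η)) - f (act γ η) - f (act δ η) + f η)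
          * (g (act γ (act δ η)) - g (act γ η) - g (act δ η) + g η) := by
  intro f g
  classical
  set E : (S → G → G → ℝ) → ℝ :=
    fun ψ => ∑ η, π η * ∑ γ, ∑ δ, R η γ δ * ψ η γ δ with hE
  -- R is globally symmetric
  have hRsymm : ∀ η γ δ, R η γ δ = R η δ γ := by
    intro η γ δ
    rcases (hR η γ δ).lt_or_eq with h | h
    · exact hP1 _ _ _ h
    · rcases (hR η δ γ).lt_or_eq with h2 | h2
      · exact (hP1 _ _ _ h2).symm
      · rw [← h, ← h2]
  -- E agrees on functions that agree on the support of R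
  have Eext : ∀ ψ χ : S → G → G → ℝ,
      (∀ η γ δ, 0 < R η γ δ → ψ η γ δ = χ η γ δ) → E ψ = E χ := by
    intro ψ χ h
    refine Finset.sum_congr rfl fun η _ => ?_
    congr 1
    refine Finset.sum_congr rfl fun γ _ => Finset.sum_congr rfl fun δ _ => ?_
    rcases (hR η γ δ).lt_or_eq with hpos | h0
    · rw [h _ _ _ hpos]
    · rw [← h0]; ring
  have Econg : ∀ ψ χ : S → G → G → ℝ,
      (∀ η γ δ, ψ η γ δ = χ η γ δ) → E ψ = E χ :=
    fun ψ χ h => Eext ψ χ fun η γ δ _ => h η γ δ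
  have Esub : ∀ ψ χ : S → G → G → ℝ,
      E (fun η γ δ => ψ η γ δ - χ η γ δ) = E ψ - E χ := by
    intro ψ χ
    simp only [hE, mul_sub, Finset.sum_sub_distrib]
  have Eneg : ∀ ψ : S → G → G → ℝ,
      E (fun η γ δ => -ψ η γ δ) = -E ψ := by
    intro ψ
    simp only [hE, mul_neg, Finset.sum_neg_distrib]
  -- swapping the two group variables
  have Eswap : ∀ ψ : S → G → G → ℝ,
      E ψ = E (fun η γ δ => ψ η δ γ) := by
    intro ψ
    refine Finset.sum_congr rfl fun η _ => ?_
    congr 1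
    rw [Finset.sum_comm]
    refine Finset.sum_congr rfl fun γ _ => Finset.sum_congr rfl fun δ _ => ?_
    rw [hRsymm η δ γ]
  have hP2' : ∀ ψ : S → G → G → ℝ,
      E ψ = E (fun η γ δ => ψ (act γ η) (inv γ) δ) := fun ψ => hP2 ψ
  -- the basic quantities
  set ψ0 : S → G → G → ℝ :=
    fun η γ δ => (f (act γ η) - f η) * (g (act δ η) - g η) with hψ0
  set ψC : S → G → G → ℝ :=
    fun η γ δ => (f (act γ η) - f η)
      * (g (act γ (act δ η)) - g (act γ η) - g (act δ η) + g η) with hψC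
  set ψE : S → G → G → ℝ :=
    fun η γ δ => (f (act δ η) - f η)
      * (g (act γ (act δ η)) - g (act γ η) - g (act δ η) + g η) with hψE
  set Φ : S → G → G → ℝ :=
    fun η γ δ => (f (act γ (act δ η)) - f (act γ η) - f (act δ η) + f η)
      * (g (act γ (act δ η)) - g (act γ η) - g (act δ η) + g η) with hΦ
  -- Step 1 : E ψ0 = - E ψB  where ψB η γ δ = ∇γ f (η) * (g(γδη) - g(γη))
  set ψB : S → G → G → ℝ :=
    fun η γ δ => (f (act γ η) - f η) * (g (act γ (act δ η)) - g (act γ η)) with hψB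
  have step1 : E ψ0 = -E ψB := by
    have := hP2' ψ0
    rw [this]
    rw [← Eneg ψB]
    refine Eext _ _ fun η γ δ hpos => ?_
    simp only [hψ0, hψB]
    rw [hinv, ← hP3 η γ δ hpos]
    ring
  -- ψC = ψB - ψ0, so E ψC = -2 E ψ0
  have step2 : E ψC = -2 * E ψ0 := by
    have h : E ψC = E ψB - E ψ0 := by
      rw [← Esub]
      refine Econg _ _ fun η γ δ => ?_
      simp only [hψC, hψB, hψ0]; ring
    rw [h, step1]; ring
  -- swap γ and δ in ψC to get ψE
  have step3 : E ψC = E ψE := by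
    rw [Eswap ψC]
    refine Eext _ _ fun η γ δ hpos => ?_
    simp only [hψC, hψE]
    rw [hP3 η γ δ hpos]; ring
  -- apply P2 to ψE
  have step4 : E Φ = -2 * E ψE := by
    have h : E ψE = E (fun η γ δ => -Φ η γ δ - ψE η γ δ) := by
      rw [hP2' ψE]
      refine Eext _ _ fun η γ δ hpos => ?_
      simp only [hψE, hΦ]
      rw [← hP3 η γ δ hpos, hinv, hinv]
      ring
    have h2 : E (fun η γ δ => -Φ η γ δ - ψE η γ δ)
        = -E Φ - E ψE := by
      rw [Esub, Eneg]
    rw [h2] at h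
    linarith
  -- conclude
  have key : E ψ0 = (1 / 4) * E Φ := by
    rw [step4, ← step3, step2]; ring
  have hL : (∑ η, π η * ∑ γ, ∑ δ, R η γ δ
      * (f (act γ η) - f η) * (g (act δ η) - g η)) = E ψ0 := by
    simp only [hE, hψ0, mul_assoc]
  have hRHS : (∑ η, π η * ∑ γ, ∑ δ, R η γ δ
      * (f (act γ (act δ η)) - f (act γ η) - f (act δ η) + f η)
      * (g (act γ (act δ η)) - g (act γ η) - g (act δ η) + g η)) = E Φ := by
    simp only [hE, hΦ, mul_assoc]
  rw [hL, hRHS, key]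
end

section
/- Let λ > 0 and π_λ be the Poisson distribution on ℕ, π_λ(n) = e^{−λ} λⁿ/n!. For every k ∈ ℕ, with f_k(n) := e^{kn}, one has Ent_{π_λ}(f_k) = (kλe^k − λe^k + λ)·e^{λ(e^k−1)} and λ·∑_n π_λ(n)(f_k(n+1) − f_k(n))(log f_k(n+1) − log f_k(n)) = λk(e^k − 1)·e^{λ(e^k−1)}. -/
/-!
The weights `π_λ(n) e^{kn} = e^{-λ} (λe^k)^n / n!` are, up to the factor `e^{λ(e^k-1)}`,
the Poisson weights of parameter `λe^k`; hence `∑ π_λ f_k = e^{λ(e^k-1)}` and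
`∑ π_λ f_k log f_k = kλe^k e^{λ(e^k-1)}`, which give the entropy. On the gradient side,
`f_k(n+1) - f_k(n) = (e^k - 1) f_k(n)` and `log f_k(n+1) - log f_k(n) = k`.
-/

section

open Real Nat

lemma hasSum_pow_div_factorial (x : ℝ) : HasSum (fun n : ℕ => x ^ n / n !) (exp x) := by
  rw [exp_eq_exp_ℝ]
  exact NormedSpace.expSeries_div_hasSum_exp x

lemma hasSum_nat_mul_pow_div_factorial (x : ℝ) :
    HasSum (fun n : ℕ => n * x ^ n / n !) (x * exp x) := by
  have hterm : (fun n : ℕ => ((n + 1 : ℕ) : ℝ) * x ^ (n + 1) / (n + 1)!) =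
      fun n : ℕ => x * (x ^ n / n !) := by
    funext n
    rw [factorial_succ]
    push_cast
    field_simp
    ring
  have hshift := (hasSum_pow_div_factorial x).mul_left x
  rw [← hterm] at hshift
  simpa only [CharP.cast_eq_zero, zero_mul, zero_div, zero_add] using
    HasSum.zero_add (f := fun n : ℕ => n * x ^ n / n !) hshift

variable (lam t : ℝ)

lemma poisson_mul_exp_eq (n : ℕ) :
    exp (-lam) * lam ^ n / n ! * exp (t * n) = exp (-lam) * ((lam * exp t) ^ n / n !) := by
  rw [mul_comm t, exp_nat_mul, mul_pow]
  ring

lemma hasSum_poisson_mul_exp :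
    HasSum (fun n : ℕ => exp (-lam) * lam ^ n / n ! * exp (t * n)) (exp (lam * (exp t - 1))) := by
  have hmass : exp (-lam) * exp (lam * exp t) = exp (lam * (exp t - 1)) := by
    rw [← exp_add]
    ring_nf
  simpa only [poisson_mul_exp_eq, hmass] using
    (hasSum_pow_div_factorial (lam * exp t)).mul_left (exp (-lam))

lemma hasSum_poisson_mul_exp_mul :
    HasSum (fun n : ℕ => exp (-lam) * lam ^ n / n ! * exp (t * n) * (t * n))
      (t * lam * exp t * exp (lam * (exp t - 1))) := by
  have hterm : ∀ n : ℕ, exp (-lam) * lam ^ n / n ! * exp (t * n) * (t * n) =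
      t * exp (-lam) * (n * (lam * exp t) ^ n / n !) := by
    intro n
    rw [poisson_mul_exp_eq]
    ring
  have hmoment : t * exp (-lam) * (lam * exp t * exp (lam * exp t)) =
      t * lam * exp t * exp (lam * (exp t - 1)) := by
    rw [show lam * (exp t - 1) = -lam + lam * exp t by ring, exp_add]
    ring
  simpa only [hterm, hmoment] using
    (hasSum_nat_mul_pow_div_factorial (lam * exp t)).mul_left (t * exp (-lam))

end

theorem stmt_9_general (lam : ℝ)
    (π : ℕ → ℝ) (hπ : ∀ n, π n = Real.exp (-lam) * lam ^ n / n.factorial)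
    (k : ℕ) (f : ℕ → ℝ) (hf : ∀ n, f n = Real.exp (k * n)) :
    ((∑' n, π n * f n * Real.log (f n))
        - (∑' n, π n * f n) * Real.log (∑' n, π n * f n))
      = (k * lam * Real.exp k - lam * Real.exp k + lam)
          * Real.exp (lam * (Real.exp k - 1))
    ∧ lam * ∑' n, π n * (f (n + 1) - f n) * (Real.log (f (n + 1)) - Real.log (f n))
      = lam * k * (Real.exp k - 1) * Real.exp (lam * (Real.exp k - 1)) := by
  have hlog : ∀ n, Real.log (f n) = k * n := fun n => by rw [hf, Real.log_exp]
  have hmass : ∑' n, π n * f n = Real.exp (lam * (Real.exp k - 1)) := by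
    simpa only [hπ, hf] using (hasSum_poisson_mul_exp lam k).tsum_eq
  have hmoment : ∑' n, π n * f n * Real.log (f n) =
      k * lam * Real.exp k * Real.exp (lam * (Real.exp k - 1)) := by
    simpa only [hπ, hf, Real.log_exp] using (hasSum_poisson_mul_exp_mul lam k).tsum_eq
  have hgrad : ∀ n : ℕ, π n * (f (n + 1) - f n) * (Real.log (f (n + 1)) - Real.log (f n)) =
      k * (Real.exp k - 1) * (π n * f n) := by
    intro n
    rw [hlog, hlog, hf, hf, Nat.cast_succ, mul_add_one, Real.exp_add]
    ring
  refine ⟨?_, ?_⟩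
  · rw [hmoment, hmass, Real.log_exp]
    ring
  · rw [tsum_congr hgrad, tsum_mul_left, hmass]
    ring

theorem stmt_9 (lam : ℝ) (hlam : 0 < lam)
    (π : ℕ → ℝ) (hπ : ∀ n, π n = Real.exp (-lam) * lam ^ n / n.factorial)
    (k : ℕ) (f : ℕ → ℝ) (hf : ∀ n, f n = Real.exp (k * n)) :
    ((∑' n, π n * f n * Real.log (f n))
        - (∑' n, π n * f n) * Real.log (∑' n, π n * f n))
      = (k * lam * Real.exp k - lam * Real.exp k + lam)
          * Real.exp (lam * (Real.exp k - 1))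
    ∧ lam * ∑' n, π n * (f (n + 1) - f n) * (Real.log (f (n + 1)) - Real.log (f n))
      = lam * k * (Real.exp k - 1) * Real.exp (lam * (Real.exp k - 1)) :=
  stmt_9_general lam π hπ k f hf
end

section
/- Let γ : ℕ → (0,∞) be log-concave, i.e., γ(n)² ≥ γ(n+1)γ(n−1) for all n ≥ 1, and define b(n) := n·γ(n−1)/γ(n) for n ≥ 1 and b(0) := 0. Then b(n+1) − b(n) ≥ γ(0)/γ(1) = b(1) for all n ≥ 0. -/
theorem stmt_11 (γ : ℕ → ℝ) (hγ : ∀ n, 0 < γ n)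
    (hlc : ∀ n, 1 ≤ n → (γ n) ^ 2 ≥ γ (n + 1) * γ (n - 1))
    (b : ℕ → ℝ) (hb0 : b 0 = 0)
    (hb : ∀ n, 1 ≤ n → b n = n * γ (n - 1) / γ n) :
    ∀ n, b (n + 1) - b n ≥ γ 0 / γ 1 := by
  have hstep : ∀ n, γ n / γ (n + 1) ≥ γ 0 / γ 1 := by
    intro n
    induction n with
    | zero => exact le_refl _
    | succ m ih =>
      have h := hlc (m + 1) (by omega)
      simp only [Nat.add_sub_cancel] at h
      have hmono : γ m / γ (m + 1) ≤ γ (m + 1) / γ (m + 2) := by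
        rw [div_le_div_iff₀ (hγ (m + 1)) (hγ (m + 2))]
        have : γ (m + 1) ^ 2 ≥ γ (m + 2) * γ m := h
        nlinarith [hγ m, hγ (m + 1), hγ (m + 2)]
      exact le_trans ih hmono
  intro n
  match n with
  | 0 =>
    rw [hb 1 le_rfl, hb0]
    simp
  | Nat.succ m =>
    rw [hb (m + 2) (by omega), hb (m + 1) (by omega)]
    simp only [Nat.add_sub_cancel]
    have h1 := hstep (m + 1)
    have hmono : γ m / γ (m + 1) ≤ γ (m + 1) / γ (m + 2) := by
      have h := hlc (m + 1) (by omega)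
      simp only [Nat.add_sub_cancel] at h
      rw [div_le_div_iff₀ (hγ (m + 1)) (hγ (m + 2))]
      nlinarith [hγ m, hγ (m + 1), hγ (m + 2)]
    have key : ((m : ℝ) + 2) * γ (m + 1) / γ (m + 2) - ((m : ℝ) + 1) * γ m / γ (m + 1)
        ≥ γ (m + 1) / γ (m + 2) := by
      have : ((m : ℝ) + 2) * γ (m + 1) / γ (m + 2) - ((m : ℝ) + 1) * γ m / γ (m + 1)
          = γ (m + 1) / γ (m + 2)
            + ((m : ℝ) + 1) * (γ (m + 1) / γ (m + 2) - γ m / γ (m + 1)) := by ring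
      rw [this]
      have hpos : (0 : ℝ) ≤ ((m : ℝ) + 1) * (γ (m + 1) / γ (m + 2) - γ m / γ (m + 1)) := by
        apply mul_nonneg (by positivity)
        linarith
      linarith
    push_cast
    exact le_trans h1 key
end

section
/- Let L ≥ 3 and consider S = the set of η ∈ {0,1,…,L−1}→{0,1} with exactly one entry equal to 1 (one particle). Let c₁ > c₂ = c₃ = … = c_L = 1 be jump rates, π(x) proportional to 1/c_x, f : {1,…,L} → (0,∞), and Q_x := ∑_{y,z} [ (f_y − f_x)·log(f_z/f_x) + (f_y − f_x)(f_z − f_x)/f_x ]. Then for L = 3, f₁ = 1, f₂ = 2, f₃ = ε with ε > 0 sufficiently small, Q₁ = ε(log 2 + ε + log ε) < 0, and consequently c₁Q₁ + Q₂ + Q₃ < 0 for c₁ sufficiently large. -/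
/-- `Q x` for the one-particle zero-range process on the complete graph with 3 sites,
with values `f` of the test function at the three sites. -/
noncomputable def Qfun (f : Fin 3 → ℝ) (x : Fin 3) : ℝ :=
  ∑ y, ∑ z, ((f y - f x) * Real.log (f z / f x) + (f y - f x) * (f z - f x) / f x)

theorem stmt_15 :
    ∃ ε₀ > (0 : ℝ), ∀ ε : ℝ, 0 < ε → ε < ε₀ →
      Qfun ![1, 2, ε] 0 = ε * (Real.log 2 + ε + Real.log ε)
      ∧ Qfun ![1, 2, ε] 0 < 0
      ∧ ∃ C : ℝ, ∀ c₁ : ℝ, C < c₁ →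
          c₁ * Qfun ![1, 2, ε] 0 + Qfun ![1, 2, ε] 1 + Qfun ![1, 2, ε] 2 < 0 := by
  refine ⟨1/4, by norm_num, fun ε hε hε' => ?_⟩
  have hQ0 : Qfun ![1, 2, ε] 0 = ε * (Real.log 2 + ε + Real.log ε) := by
    simp [Qfun, Fin.sum_univ_three, Real.log_one]
    ring
  have hneg : Real.log 2 + ε + Real.log ε < 0 := by
    have h1 : Real.log ε < Real.log (1/4) := Real.log_lt_log hε hε'
    have h2 : Real.log (1/4 : ℝ) = -(2 * Real.log 2) := by
      rw [show (1/4:ℝ) = 2⁻¹ ^ 2 by norm_num, Real.log_pow, Real.log_inv]; push_cast; ring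
    nlinarith [Real.log_two_gt_d9]
  have hQ0neg : Qfun ![1, 2, ε] 0 < 0 := by
    rw [hQ0]; exact mul_neg_of_pos_of_neg hε hneg
  refine ⟨hQ0, hQ0neg,
    (Qfun ![1, 2, ε] 1 + Qfun ![1, 2, ε] 2) / (-Qfun ![1, 2, ε] 0), fun c₁ hc => ?_⟩
  have h := (div_lt_iff₀ (by linarith : (0:ℝ) < -Qfun ![1, 2, ε] 0)).mp hc
  nlinarith [h]
end
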